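/- For the Sabra shell model nonlinearity, the helicity H = Σ_n (-1)^n k_n |u_n|^2 is conserved: for any finitely supported complex sequence (u_n), Σ_n (-1)^n k_n · 2 Re(conj(u_n) B_n[u]) = 0, where k_n = 2^n. -/
import Mathlib


open Complex

/-- Sabra shell model nonlinearity, with `k n = 2^n`. -/
noncomputable def sabraB (u : ℤ → ℂ) (n : ℤ) : ℂ :=
  Complex.I * ((2:ℂ)^(n+1) * u (n+2) * (starRingEnd ℂ) (u (n+1))
    - (1/2) * (2:ℂ)^n * u (n+1) * (starRingEnd ℂ) (u (n-1))
    + (1/2) * (2:ℂ)^(n-1) * u (n-1) * u (n-2))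

/-- Helicity conservation of the Sabra nonlinearity. -/
theorem sabra_helicity_conservation (u : ℤ → ℂ) (h : (Function.support u).Finite) :
    ∑ᶠ n : ℤ, (-1:ℝ)^n * (2:ℝ)^n * (2 * ((starRingEnd ℂ) (u n) * sabraB u n).re) = 0 := by
  set P : ℤ → ℝ := fun n =>
    ((starRingEnd ℂ) (u n) * (starRingEnd ℂ) (u (n+1)) * u (n+2)).im with hP
  have hPfin : (Function.support P).Finite := by
    refine h.subset fun n hn => ?_
    intro h0
    apply hn
    simp [hP, h0]
  set a : ℤ → ℝ := fun n => (-1:ℝ)^n * (-4) * ((2:ℝ)^n)^2 * P n with ha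
  set b : ℤ → ℝ := fun n => (-1:ℝ)^n * ((2:ℝ)^n)^2 * P (n-1) with hb
  set c : ℤ → ℝ := fun n => (-1:ℝ)^n * (1/2) * ((2:ℝ)^n)^2 * P (n-2) with hc
  have hafin : (Function.support a).Finite := by
    refine hPfin.subset fun n hn => ?_
    intro h0; apply hn; simp [ha, h0]
  have hbfin : (Function.support b).Finite := by
    refine ((hPfin.image (· + 1)).subset (fun n hn => ?_))
    have h1 : P (n - 1) ≠ 0 := by
      intro h0; apply hn; simp [hb, h0]
    exact ⟨n - 1, h1, by ring⟩
  have hcfin : (Function.support c).Finite := by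
    refine ((hPfin.image (· + 2)).subset (fun n hn => ?_))
    have h1 : P (n - 2) ≠ 0 := by
      intro h0; apply hn; simp [hc, h0]
    exact ⟨n - 2, h1, by ring⟩
  have key : ∀ n : ℤ,
      (-1:ℝ)^n * (2:ℝ)^n * (2 * ((starRingEnd ℂ) (u n) * sabraB u n).re)
        = a n + b n + c n := by
    intro n
    have e2 : (2:ℂ) = ((2:ℝ):ℂ) := by norm_num
    simp only [ha, hb, hc, hP, sabraB, e2, ← Complex.ofReal_zpow,
      show n - 1 + 1 = n from by ring, show n - 1 + 2 = n + 1 from by ring,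
      show n - 2 + 1 = n - 1 from by ring, show n - 2 + 2 = n from by ring]
    simp only [Complex.mul_re, Complex.mul_im, Complex.add_re, Complex.add_im,
      Complex.sub_re, Complex.sub_im, Complex.I_re, Complex.I_im,
      Complex.conj_re, Complex.conj_im, Complex.ofReal_re, Complex.ofReal_im,
      Complex.div_re, Complex.div_im, Complex.one_re, Complex.one_im,
      Complex.normSq_ofReal]
    have t1 : (2:ℝ)^(n+1) = (2:ℝ)^n * 2 := by
      rw [zpow_add_one₀ (by norm_num : (2:ℝ) ≠ 0)]
    have t2 : (2:ℝ)^(n-1) = (2:ℝ)^n / 2 := by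
      rw [zpow_sub_one₀ (by norm_num : (2:ℝ) ≠ 0)]; ring
    rw [t1, t2]
    ring
  rw [finsum_congr key]
  rw [finsum_add_distrib (hafin.union hbfin |>.subset
        (Function.support_add _ _)) hcfin,
      finsum_add_distrib hafin hbfin]
  have hb' : ∑ᶠ n : ℤ, b n = ∑ᶠ n : ℤ, b (n + 1) :=
    (finsum_comp_equiv (Equiv.addRight (1:ℤ))).symm
  have hc' : ∑ᶠ n : ℤ, c n = ∑ᶠ n : ℤ, c (n + 2) :=
    (finsum_comp_equiv (Equiv.addRight (2:ℤ))).symm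
  have hz : ∀ n : ℤ, a n + b (n + 1) + c (n + 2) = 0 := by
    intro n
    have e1 : (-1:ℝ)^(n+1) = (-1:ℝ)^n * (-1) := by
      rw [zpow_add_one₀ (by norm_num : (-1:ℝ) ≠ 0)]
    have e2 : (-1:ℝ)^(n+2) = (-1:ℝ)^n := by
      rw [zpow_add₀ (by norm_num : (-1:ℝ) ≠ 0)]; norm_num
    have f1 : (2:ℝ)^(n+1) = (2:ℝ)^n * 2 := by
      rw [zpow_add_one₀ (by norm_num : (2:ℝ) ≠ 0)]
    have f2 : (2:ℝ)^(n+2) = (2:ℝ)^n * 4 := by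
      rw [zpow_add₀ (by norm_num : (2:ℝ) ≠ 0)]; norm_num
    simp only [ha, hb, hc, e1, e2, f1, f2, add_sub_cancel_right]
    ring
  have : ∑ᶠ n : ℤ, a n + ∑ᶠ n : ℤ, b (n+1) + ∑ᶠ n : ℤ, c (n+2) = 0 := by
    have hbfin' : (Function.support fun n => b (n+1)).Finite := by
      refine (hbfin.image (· - 1)).subset fun n hn => ⟨n + 1, hn, by ring⟩
    have hcfin' : (Function.support fun n => c (n+2)).Finite := by
      refine (hcfin.image (· - 2)).subset fun n hn => ⟨n + 2, hn, by ring⟩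
    rw [← finsum_add_distrib hafin hbfin',
        ← finsum_add_distrib ((hafin.union hbfin').subset (Function.support_add _ _)) hcfin']
    simp only [hz, finsum_zero]
  rw [hb', hc']
  linarith [this]
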